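/- arXiv:2402.06940 — 3 statements merged into one kernel-verified Lean document; each statement's English description precedes it below -/
import Mathlib

section
/- Let μ be a σ-finite measure on a measurable space X, let ℓ : X → ℝ be measurable with ℓ(x) > 0 for μ-a.e. x and Z := ∫ ℓ dμ ∈ (0, ∞), and let π be the probability measure with density ℓ/Z with respect to μ. Let g : X → ℝ be measurable with g(x) > 0 for μ-a.e. x and Z_g := ∫ g dμ ∈ (0, ∞), and let q be the probability measure with density g/Z_g with respect to μ. Assume log ℓ and log g are integrable with respect to π. Then the Kullback–Leibler divergence satisfies KL(π ‖ q) = ∫ log ℓ dπ − ∫ log g dπ + log ∫ (g/ℓ) dπ. -/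
open MeasureTheory Real ENNReal NNReal

/-- The Kullback–Leibler divergence `KL(p ‖ q) = ∫ log (dp/dq) dp`. -/
noncomputable def klDiv {X : Type*} [MeasurableSpace X] (p q : Measure X) : ℝ :=
  ∫ x, Real.log ((p.rnDeriv q) x).toReal ∂p

/-- If the posterior `p` has density `ℓ/Z` and `q` has density
`g/Z_g` with respect to `μ`, with `ℓ, g` a.e. positive and `Z, Z_g` positive and
finite, and `log ℓ`, `log g` are `p`-integrable, then
`KL(p ‖ q) = ∫ log ℓ dp − ∫ log g dp + log ∫ (g/ℓ) dp`. -/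
theorem klDiv_eq_of_densities
    {X : Type*} [MeasurableSpace X] (μ : Measure X) [SigmaFinite μ]
    (ℓ g : X → ℝ) (hℓ_meas : Measurable ℓ) (hg_meas : Measurable g)
    (hℓ_pos : ∀ᵐ x ∂μ, 0 < ℓ x) (hg_pos : ∀ᵐ x ∂μ, 0 < g x)
    (hℓ_int : Integrable ℓ μ) (hg_int : Integrable g μ)
    (hZ_pos : 0 < ∫ x, ℓ x ∂μ) (hZg_pos : 0 < ∫ x, g x ∂μ)
    (p q : Measure X)
    (hp : p = μ.withDensity (fun x => ENNReal.ofReal (ℓ x / ∫ x, ℓ x ∂μ)))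
    (hq : q = μ.withDensity (fun x => ENNReal.ofReal (g x / ∫ x, g x ∂μ)))
    (hlogℓ_int : Integrable (fun x => Real.log (ℓ x)) p)
    (hlogg_int : Integrable (fun x => Real.log (g x)) p) :
    klDiv p q =
      ∫ x, Real.log (ℓ x) ∂p - ∫ x, Real.log (g x) ∂p +
        Real.log (∫ x, g x / ℓ x ∂p) := by
  set Z : ℝ := ∫ x, ℓ x ∂μ with hZ
  set Zg : ℝ := ∫ x, g x ∂μ with hZg
  have hZne : Z ≠ 0 := ne_of_gt hZ_pos
  have hZgne : Zg ≠ 0 := ne_of_gt hZg_pos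
  -- p ≪ μ
  have hpac : p ≪ μ := hp ▸ withDensity_absolutelyContinuous μ _
  have hℓ_pos_p : ∀ᵐ x ∂p, 0 < ℓ x := hpac.ae_le hℓ_pos
  have hg_pos_p : ∀ᵐ x ∂p, 0 < g x := hpac.ae_le hg_pos
  -- q is a finite measure
  have hq_univ : q Set.univ = 1 := by
    rw [hq, withDensity_apply _ MeasurableSet.univ, Measure.restrict_univ]
    rw [← ofReal_integral_eq_lintegral_ofReal (hg_int.div_const Zg)
      (hg_pos.mono fun x hx => le_of_lt (div_pos hx hZg_pos))]
    rw [integral_div, ← hZg, div_self hZgne, ENNReal.ofReal_one]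
  have : IsFiniteMeasure q := ⟨by simp [hq_univ]⟩
  -- p is a probability measure
  have hp_univ : p Set.univ = 1 := by
    rw [hp, withDensity_apply _ MeasurableSet.univ, Measure.restrict_univ]
    rw [← ofReal_integral_eq_lintegral_ofReal (hℓ_int.div_const Z)
      (hℓ_pos.mono fun x hx => le_of_lt (div_pos hx hZ_pos))]
    rw [integral_div, ← hZ, div_self hZne, ENNReal.ofReal_one]
  have hp_prob : IsProbabilityMeasure p := ⟨hp_univ⟩
  -- the density of p with respect to q
  set h : X → ℝ≥0∞ := fun x => ENNReal.ofReal ((ℓ x / Z) / (g x / Zg)) with hh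
  have hh_meas : Measurable h := by
    apply Measurable.ennreal_ofReal
    exact (hℓ_meas.div_const Z).div (hg_meas.div_const Zg)
  have hpq : p = q.withDensity h := by
    rw [hq, ← withDensity_mul μ (by measurability) hh_meas, hp]
    apply withDensity_congr_ae
    filter_upwards [hg_pos] with x hgx
    have hgZ : g x / Zg ≠ 0 := ne_of_gt (div_pos hgx hZg_pos)
    rw [Pi.mul_apply, hh, ← ENNReal.ofReal_mul (le_of_lt (div_pos hgx hZg_pos)),
      mul_div_cancel₀ _ hgZ]
  have hpq_ac : p ≪ q := hpq ▸ withDensity_absolutelyContinuous q h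
  have hrn : p.rnDeriv q =ᵐ[p] h := by
    refine hpq_ac.ae_eq ?_
    calc p.rnDeriv q =ᵐ[q] (q.withDensity h).rnDeriv q := by rw [hpq]
    _ =ᵐ[q] h := Measure.rnDeriv_withDensity q hh_meas
  -- pointwise formula for the log density
  have hlog_ae : (fun x => Real.log ((p.rnDeriv q) x).toReal) =ᵐ[p]
      fun x => Real.log (ℓ x) - Real.log (g x) + Real.log (Zg / Z) := by
    filter_upwards [hrn, hℓ_pos_p, hg_pos_p] with x hrx hℓx hgx
    have h1 : (0:ℝ) < ℓ x / Z := div_pos hℓx hZ_pos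
    have h2 : (0:ℝ) < g x / Zg := div_pos hgx hZg_pos
    rw [hrx, hh, ENNReal.toReal_ofReal (le_of_lt (div_pos h1 h2)),
      Real.log_div (ne_of_gt h1) (ne_of_gt h2),
      Real.log_div (ne_of_gt hℓx) hZne, Real.log_div (ne_of_gt hgx) hZgne,
      Real.log_div hZgne hZne]
    ring
  -- compute ∫ g/ℓ dp = Zg / Z
  have hint_gl : ∫ x, g x / ℓ x ∂p = Zg / Z := by
    have hf_meas : Measurable fun x => Real.toNNReal (ℓ x / Z) :=
      (hℓ_meas.div_const Z).real_toNNReal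
    calc ∫ x, g x / ℓ x ∂p
        = ∫ x, Real.toNNReal (ℓ x / Z) • (g x / ℓ x) ∂μ := by
          rw [hp]
          exact integral_withDensity_eq_integral_smul hf_meas _
      _ = ∫ x, g x / Z ∂μ := by
          apply integral_congr_ae
          filter_upwards [hℓ_pos, hg_pos] with x hℓx hgx
          have h1 : (0:ℝ) ≤ ℓ x / Z := le_of_lt (div_pos hℓx hZ_pos)
          rw [NNReal.smul_def, smul_eq_mul, Real.coe_toNNReal _ h1]
          field_simp
      _ = Zg / Z := by rw [integral_div]
  have hsub : Integrable (fun a => Real.log (ℓ a) - Real.log (g a)) p :=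
    hlogℓ_int.sub hlogg_int
  rw [hint_gl, klDiv, integral_congr_ae hlog_ae,
    integral_add hsub (integrable_const _),
    integral_sub hlogℓ_int hlogg_int, integral_const]
  simp [hp_univ]
end

section
/- Let μ be a σ-finite measure on a measurable space X, let ℓ : X → ℝ be measurable with ℓ(x) > 0 for μ-a.e. x and Z := ∫ ℓ dμ ∈ (0, ∞), and let π be the probability measure with density ℓ/Z with respect to μ. Let f₁, …, f_{N̂} : X → ℝ be measurable with f_i(x) > 0 for μ-a.e. x, and for w ∈ ℝ^{N̂} define g_w(x) := ∏_{i=1}^{N̂} f_i(x)^{w_i}. Let W ⊆ ℝ^{N̂} be any set of weight vectors such that for every w ∈ W: ∫ g_w dμ ∈ (0, ∞), the functions log ℓ and ∑_i w_i log f_i are π-integrable, and let q_w be the probability measure with density g_w / ∫ g_w dμ with respect to μ. Define the objective J(w) := ∫ (∑_{i=1}^{N̂} w_i log f_i) dπ − log ∫ exp(∑_{i=1}^{N̂} w_i log f_i − log ℓ) dπ. Then KL(π ‖ q_w) = ∫ log ℓ dπ − J(w) for every w ∈ W; consequently, w* ∈ W minimizes w ↦ KL(π ‖ q_w) over W if and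 only if w* maximizes J over W. In particular this holds for W equal to the intersection of the admissible weights with the affine set {w : ∑_{i=1}^{N̂} w_i = N*}. -/
/-!
Both `p` and `q w` are exponential tilts of `μ`: by `log ℓ`, with normalizer `Z = ∫ ℓ dμ`, and by
`G w = ∑ i, w i * log (f i)`, with normalizer `Z_w = ∫ g_w dμ`. The log-likelihood ratio of two
tilts of the same measure is the difference of the tilting functions plus the difference of the
log-normalizers, so `KL(p ‖ q w) = ∫ log ℓ dp - ∫ G w dp + log Z_w - log Z`. On the other hand
`∫ exp (G w - log ℓ) dp = Z_w / Z`, so `J w = ∫ G w dp - log Z_w + log Z` and the normalizers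
cancel in `∫ log ℓ dp - J w`.
-/

open MeasureTheory Real

lemma Real.exp_sum_mul_log {ι : Type*} {s : Finset ι} {x : ι → ℝ} (w : ι → ℝ)
    (hx : ∀ i ∈ s, 0 < x i) :
    exp (∑ i ∈ s, w i * log (x i)) = ∏ i ∈ s, x i ^ w i := by
  rw [exp_sum]
  refine Finset.prod_congr rfl fun i hi => ?_
  rw [rpow_def_of_pos (hx i hi), mul_comm]

lemma isMinOn_iff_isMaxOn_of_eq_const_sub {α β : Type*} [AddCommGroup β] [PartialOrder β]
    [IsOrderedAddMonoid β] {s : Set α} {F G : α → β} {c : β} (h : ∀ x ∈ s, F x = c - G x)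
    {a : α} (ha : a ∈ s) : IsMinOn F s a ↔ IsMaxOn G s a := by
  simp only [isMinOn_iff, isMaxOn_iff]
  refine forall₂_congr fun x hx => ?_
  rw [h a ha, h x hx, sub_le_sub_iff_left]

namespace MeasureTheory

variable {X : Type*} [MeasurableSpace X] {μ : Measure X} {f g : X → ℝ}

lemma withDensity_ofReal_div_integral_eq_tilted (hfg : (fun x => exp (f x)) =ᵐ[μ] g) :
    μ.withDensity (fun x => ENNReal.ofReal (g x / ∫ x, g x ∂μ)) = μ.tilted f := by
  rw [Measure.tilted, integral_congr_ae hfg]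
  exact withDensity_congr_ae (hfg.mono fun x hx => by simp only [hx])

lemma integral_exp_sub_tilted (f g : X → ℝ) :
    ∫ x, exp (g x - f x) ∂(μ.tilted f) = (∫ x, exp (g x) ∂μ) / ∫ x, exp (f x) ∂μ := by
  rw [integral_tilted, ← integral_div]
  refine integral_congr_ae (ae_of_all _ fun x => ?_)
  simp only [smul_eq_mul, exp_sub]
  field_simp

lemma llr_tilted_self [SigmaFinite μ] (hfμ : Integrable (fun x => exp (f x)) μ)
    (hf : AEMeasurable f μ) :
    llr (μ.tilted f) μ =ᵐ[μ] fun x => f x - log (∫ z, exp (f z) ∂μ) := by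
  filter_upwards [llr_tilted_left Measure.AbsolutelyContinuous.rfl hfμ hf, llr_self μ]
    with x hx hx_self
  rw [hx, hx_self, Pi.zero_apply, add_zero]

lemma integral_llr_tilted_tilted [SigmaFinite μ] [NeZero μ]
    (hfμ : Integrable (fun x => exp (f x)) μ) (hgμ : Integrable (fun x => exp (g x)) μ)
    (hf_meas : AEMeasurable f μ) (hf : Integrable f (μ.tilted f))
    (hg : Integrable g (μ.tilted f)) :
    ∫ x, llr (μ.tilted f) (μ.tilted g) x ∂(μ.tilted f) =
      ∫ x, f x ∂(μ.tilted f) - log (∫ x, exp (f x) ∂μ) - ∫ x, g x ∂(μ.tilted f) +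
        log (∫ x, exp (g x) ∂μ) := by
  have := isProbabilityMeasure_tilted hfμ
  have hac : μ.tilted f ≪ μ := tilted_absolutelyContinuous μ f
  have hllr : llr (μ.tilted f) μ =ᵐ[μ.tilted f] fun x => f x - log (∫ z, exp (f z) ∂μ) :=
    hac.ae_le (llr_tilted_self hfμ hf_meas)
  have hf_sub : Integrable (fun x => f x - log (∫ z, exp (f z) ∂μ)) (μ.tilted f) :=
    hf.sub (integrable_const _)
  rw [integral_llr_tilted_right hac hg hgμ (hf_sub.congr hllr.symm), integral_congr_ae hllr,
    integral_sub hf (integrable_const _), integral_const, probReal_univ, one_smul]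

theorem klDiv_tilted_tilted [SigmaFinite μ] [NeZero μ]
    (hfμ : Integrable (fun x => exp (f x)) μ) (hgμ : Integrable (fun x => exp (g x)) μ)
    (hf_meas : AEMeasurable f μ) (hf : Integrable f (μ.tilted f))
    (hg : Integrable g (μ.tilted f)) :
    klDiv (μ.tilted f) (μ.tilted g) = ∫ x, f x ∂(μ.tilted f) -
      (∫ x, g x ∂(μ.tilted f) - log (∫ x, exp (g x - f x) ∂(μ.tilted f))) := by
  change ∫ x, llr (μ.tilted f) (μ.tilted g) x ∂(μ.tilted f) = _
  rw [integral_llr_tilted_tilted hfμ hgμ hf_meas hf hg, integral_exp_sub_tilted,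
    log_div (integral_exp_pos hgμ).ne' (integral_exp_pos hfμ).ne']
  ring

end MeasureTheory

theorem single_level_objective_general
    {X : Type*} [MeasurableSpace X] (μ : Measure X) [SigmaFinite μ]
    (ℓ : X → ℝ) (hℓ_pos : ∀ᵐ x ∂μ, 0 < ℓ x)
    (hℓ_int : Integrable ℓ μ) (hZ_pos : 0 < ∫ x, ℓ x ∂μ)
    (p : Measure X)
    (hp : p = μ.withDensity (fun x => ENNReal.ofReal (ℓ x / ∫ x, ℓ x ∂μ)))
    (Nhat : ℕ) (f : Fin Nhat → X → ℝ)
    (hf_pos : ∀ i, ∀ᵐ x ∂μ, 0 < f i x)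
    (gw : (Fin Nhat → ℝ) → X → ℝ)
    (hgw : ∀ w x, gw w x = ∏ i : Fin Nhat, f i x ^ w i)
    (W : Set (Fin Nhat → ℝ))
    (hW_int : ∀ w ∈ W, Integrable (gw w) μ)
    (hlogℓ_int : Integrable (fun x => Real.log (ℓ x)) p)
    (hW_logf_int : ∀ w ∈ W,
      Integrable (fun x => ∑ i : Fin Nhat, w i * Real.log (f i x)) p)
    (q : (Fin Nhat → ℝ) → Measure X)
    (hq : ∀ w, q w =
      μ.withDensity (fun x => ENNReal.ofReal (gw w x / ∫ x, gw w x ∂μ)))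
    (J : (Fin Nhat → ℝ) → ℝ)
    (hJ : ∀ w, J w =
      (∫ x, ∑ i : Fin Nhat, w i * Real.log (f i x) ∂p) -
        Real.log (∫ x, Real.exp ((∑ i : Fin Nhat, w i * Real.log (f i x)) -
          Real.log (ℓ x)) ∂p)) :
    (∀ w ∈ W, klDiv p (q w) = (∫ x, Real.log (ℓ x) ∂p) - J w) ∧
      (∀ wstar ∈ W,
        IsMinOn (fun w => klDiv p (q w)) W wstar ↔ IsMaxOn J W wstar) := by
  have hμ : NeZero μ := ⟨by rintro rfl; simp at hZ_pos⟩
  have hexp_logℓ : (fun x => exp (log (ℓ x))) =ᵐ[μ] ℓ := hℓ_pos.mono fun x hx => exp_log hx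
  have hexp_gw : ∀ w, (fun x => exp (∑ i, w i * log (f i x))) =ᵐ[μ] gw w := fun w => by
    filter_upwards [ae_all_iff.2 hf_pos] with x hx
    rw [hgw, exp_sum_mul_log w fun i _ => hx i]
  have hp_tilted : p = μ.tilted fun x => log (ℓ x) :=
    hp.trans (withDensity_ofReal_div_integral_eq_tilted hexp_logℓ)
  have key : ∀ w ∈ W, klDiv p (q w) = (∫ x, log (ℓ x) ∂p) - J w := fun w hw => by
    rw [hq w, withDensity_ofReal_div_integral_eq_tilted (hexp_gw w), hJ w]
    subst hp_tilted
    exact klDiv_tilted_tilted (hℓ_int.congr hexp_logℓ.symm)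
      ((hW_int w hw).congr (hexp_gw w).symm) hℓ_int.aemeasurable.log hlogℓ_int
      (hW_logf_int w hw)
  exact ⟨key, fun _ hw => isMinOn_iff_isMaxOn_of_eq_const_sub key hw⟩

/-- single-level objective. With posterior `p` of density
`ℓ/Z` w.r.t. `μ`, virtual-observation likelihoods `f i`, weighted likelihood
`gw w x = ∏ i, f i x ^ w i` and reconstructed posterior `q w`, for every
admissible weight vector `w ∈ W` we have `KL(p ‖ q w) = ∫ log ℓ dp − J w`,
where `J w = ∫ ∑ i, w i * log (f i) dp − log ∫ exp (∑ i, w i * log (f i) − log ℓ) dp`;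
hence `w* ∈ W` minimizes the KL divergence over `W` iff it maximizes `J` over `W`. -/
theorem single_level_objective
    {X : Type*} [MeasurableSpace X] (μ : Measure X) [SigmaFinite μ]
    (ℓ : X → ℝ) (hℓ_meas : Measurable ℓ) (hℓ_pos : ∀ᵐ x ∂μ, 0 < ℓ x)
    (hℓ_int : Integrable ℓ μ) (hZ_pos : 0 < ∫ x, ℓ x ∂μ)
    (p : Measure X)
    (hp : p = μ.withDensity (fun x => ENNReal.ofReal (ℓ x / ∫ x, ℓ x ∂μ)))
    (Nhat : ℕ) (f : Fin Nhat → X → ℝ)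
    (hf_meas : ∀ i, Measurable (f i)) (hf_pos : ∀ i, ∀ᵐ x ∂μ, 0 < f i x)
    (gw : (Fin Nhat → ℝ) → X → ℝ)
    (hgw : ∀ w x, gw w x = ∏ i : Fin Nhat, f i x ^ w i)
    (W : Set (Fin Nhat → ℝ))
    (hW_int : ∀ w ∈ W, Integrable (gw w) μ)
    (hW_pos : ∀ w ∈ W, 0 < ∫ x, gw w x ∂μ)
    (hlogℓ_int : Integrable (fun x => Real.log (ℓ x)) p)
    (hW_logf_int : ∀ w ∈ W,
      Integrable (fun x => ∑ i : Fin Nhat, w i * Real.log (f i x)) p)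
    (q : (Fin Nhat → ℝ) → Measure X)
    (hq : ∀ w, q w =
      μ.withDensity (fun x => ENNReal.ofReal (gw w x / ∫ x, gw w x ∂μ)))
    (J : (Fin Nhat → ℝ) → ℝ)
    (hJ : ∀ w, J w =
      (∫ x, ∑ i : Fin Nhat, w i * Real.log (f i x) ∂p) -
        Real.log (∫ x, Real.exp ((∑ i : Fin Nhat, w i * Real.log (f i x)) -
          Real.log (ℓ x)) ∂p)) :
    (∀ w ∈ W, klDiv p (q w) = (∫ x, Real.log (ℓ x) ∂p) - J w) ∧
      (∀ wstar ∈ W,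
        IsMinOn (fun w => klDiv p (q w)) W wstar ↔ IsMaxOn J W wstar) :=
  single_level_objective_general μ ℓ hℓ_pos hℓ_int hZ_pos p hp Nhat f hf_pos gw hgw W hW_int
    hlogℓ_int hW_logf_int q hq J hJ
end

section
/- Let μ be a σ-finite measure on a measurable space X, let ℓ : X → ℝ be measurable with ℓ(x) > 0 for μ-a.e. x and Z := ∫ ℓ dμ ∈ (0, ∞), and let π be the probability measure with density ℓ/Z with respect to μ. For k = 1, …, K̂ let f_{k1}, …, f_{kM̂} : X → ℝ be nonnegative measurable functions, and for v ∈ ℝ^{K̂} and w₁, …, w_{K̂} ∈ ℝ^{M̂} with nonnegative entries define g_{v,w}(x) := ∏_{k=1}^{K̂} (∑_{i=1}^{M̂} w_{ki} f_{ki}(x))^{v_k}. Let W be any set of tuples (v, w₁, …, w_{K̂}) such that for every element of W: ∑_i w_{ki} f_{ki}(x) > 0 for μ-a.e. x and each k, ∫ g_{v,w} dμ ∈ (0, ∞), and log ℓ and ∑_k v_k log(∑_i w_{ki} f_{ki}) are π-integrable; let q_{v,w} be the probability measure with density g_{v,w} / ∫ g_{v,w} dμ with respect to μ. Define J(v, w)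 := ∫ ∑_{k=1}^{K̂} v_k log(∑_{i=1}^{M̂} w_{ki} f_{ki}) dπ − log ∫ exp(∑_{k=1}^{K̂} v_k log(∑_{i=1}^{M̂} w_{ki} f_{ki}) − log ℓ) dπ. Then KL(π ‖ q_{v,w}) = ∫ log ℓ dπ − J(v, w) on W; consequently a tuple in W minimizes the KL divergence over W if and only if it maximizes J over W. In particular this holds for W equal to the admissible tuples with ∑_{k=1}^{K̂} v_k = K* and ∑_{i=1}^{M̂} w_{ki} = 1 for each k. -/
open MeasureTheory Real

section NormalizedDensities

variable {X : Type*} [MeasurableSpace X] {μ : Measure X}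

lemma rnDeriv_withDensity_withDensity [SigmaFinite μ] {f g : X → ENNReal}
    (hf : AEMeasurable f μ) (hf_top : ∀ᵐ x ∂μ, f x ≠ ⊤) (hg : AEMeasurable g μ)
    (hg_zero : ∀ᵐ x ∂μ, g x ≠ 0) (hg_top : ∀ᵐ x ∂μ, g x ≠ ⊤) :
    (μ.withDensity f).rnDeriv (μ.withDensity g) =ᵐ[μ] fun x => (g x)⁻¹ * f x := by
  have : SigmaFinite (μ.withDensity f) := SigmaFinite.withDensity_of_ne_top hf_top
  filter_upwards [Measure.rnDeriv_withDensity_right (μ.withDensity f) μ hg hg_zero hg_top,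
    Measure.rnDeriv_withDensity₀ μ hf] with x hfg hfμ
  rw [hfg, hfμ]

lemma log_toReal_rnDeriv_withDensity_ofReal [SigmaFinite μ] {ℓ g : X → ℝ} {a b : ℝ}
    (hℓ : AEMeasurable ℓ μ) (hℓ_pos : ∀ᵐ x ∂μ, 0 < ℓ x) (hg : AEMeasurable g μ)
    (hg_pos : ∀ᵐ x ∂μ, 0 < g x) (ha : 0 < a) (hb : 0 < b) :
    (fun x => log ((μ.withDensity fun x => ENNReal.ofReal (ℓ x / a)).rnDeriv
        (μ.withDensity fun x => ENNReal.ofReal (g x / b)) x).toReal)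
      =ᵐ[μ] fun x => log (ℓ x) - log (g x) + (log b - log a) := by
  have hg_zero : ∀ᵐ x ∂μ, ENNReal.ofReal (g x / b) ≠ 0 := by
    filter_upwards [hg_pos] with x hx
    simpa using div_pos hx hb
  filter_upwards [rnDeriv_withDensity_withDensity (hℓ.div_const a).ennreal_ofReal
      (ae_of_all _ fun _ => ENNReal.ofReal_ne_top) (hg.div_const b).ennreal_ofReal hg_zero
      (ae_of_all _ fun _ => ENNReal.ofReal_ne_top), hℓ_pos, hg_pos] with x hx hℓx hgx
  rw [hx, ENNReal.toReal_mul, ENNReal.toReal_inv, ENNReal.toReal_ofReal (by positivity),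
    ENNReal.toReal_ofReal (by positivity), log_mul (by positivity) (by positivity), log_inv,
    log_div hgx.ne' hb.ne', log_div hℓx.ne' ha.ne']
  ring

lemma isProbabilityMeasure_withDensity_ofReal_div_integral {ℓ : X → ℝ}
    (hℓ_nonneg : 0 ≤ᵐ[μ] ℓ) (hℓ_int : Integrable ℓ μ) (hZ : 0 < ∫ x, ℓ x ∂μ) :
    IsProbabilityMeasure (μ.withDensity fun x => ENNReal.ofReal (ℓ x / ∫ x, ℓ x ∂μ)) := by
  constructor
  rw [withDensity_apply _ MeasurableSet.univ, setLIntegral_univ,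
    ← ofReal_integral_eq_lintegral_ofReal (hℓ_int.div_const _)
      (hℓ_nonneg.mono fun x hx => div_nonneg hx hZ.le),
    integral_div, div_self hZ.ne', ENNReal.ofReal_one]

lemma integral_exp_sub_log_withDensity_ofReal {ℓ g L : X → ℝ} {a : ℝ}
    (hℓ : AEMeasurable ℓ μ) (hℓ_pos : ∀ᵐ x ∂μ, 0 < ℓ x) (hgL : ∀ᵐ x ∂μ, g x = exp (L x))
    (ha : 0 < a) :
    ∫ x, exp (L x - log (ℓ x)) ∂(μ.withDensity fun x => ENNReal.ofReal (ℓ x / a))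
      = (∫ x, g x ∂μ) / a := by
  rw [integral_withDensity_eq_integral_toReal_smul₀ (hℓ.div_const a).ennreal_ofReal
    (ae_of_all _ fun _ => ENNReal.ofReal_lt_top), ← integral_div]
  refine integral_congr_ae ?_
  filter_upwards [hℓ_pos, hgL] with x hℓx hgx
  rw [smul_eq_mul, ENNReal.toReal_ofReal (by positivity), exp_sub, exp_log hℓx, hgx]
  field_simp

lemma klDiv_withDensity_ofReal [SigmaFinite μ] {ℓ g L : X → ℝ} {a b : ℝ}
    (hℓ : AEMeasurable ℓ μ) (hℓ_pos : ∀ᵐ x ∂μ, 0 < ℓ x) (hg : AEMeasurable g μ)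
    (hgL : ∀ᵐ x ∂μ, g x = exp (L x)) (ha : 0 < a) (hb : 0 < b)
    [IsProbabilityMeasure (μ.withDensity fun x => ENNReal.ofReal (ℓ x / a))]
    (hlogℓ : Integrable (fun x => log (ℓ x))
      (μ.withDensity fun x => ENNReal.ofReal (ℓ x / a)))
    (hL : Integrable L (μ.withDensity fun x => ENNReal.ofReal (ℓ x / a))) :
    klDiv (μ.withDensity fun x => ENNReal.ofReal (ℓ x / a))
        (μ.withDensity fun x => ENNReal.ofReal (g x / b)) =
      (∫ x, log (ℓ x) ∂(μ.withDensity fun x => ENNReal.ofReal (ℓ x / a))) -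
        (∫ x, L x ∂(μ.withDensity fun x => ENNReal.ofReal (ℓ x / a))) + (log b - log a) := by
  have hg_pos : ∀ᵐ x ∂μ, 0 < g x := hgL.mono fun x hx => hx ▸ exp_pos _
  have hlog : (fun x => log ((μ.withDensity fun x => ENNReal.ofReal (ℓ x / a)).rnDeriv
        (μ.withDensity fun x => ENNReal.ofReal (g x / b)) x).toReal)
      =ᵐ[μ] fun x => log (ℓ x) - L x + (log b - log a) := by
    filter_upwards [log_toReal_rnDeriv_withDensity_ofReal hℓ hℓ_pos hg hg_pos ha hb, hgL]
      with x hx hgx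
    rw [hx, hgx, log_exp]
  rw [klDiv, integral_congr_ae (withDensity_absolutelyContinuous _ _ |>.ae_le hlog),
    integral_add (f := fun x => log (ℓ x) - L x) (hlogℓ.sub hL) (integrable_const _),
    integral_sub hlogℓ hL, integral_const, probReal_univ, one_smul]

lemma klDiv_normalized_withDensity_eq [SigmaFinite μ] {ℓ g L : X → ℝ}
    (hℓ : AEMeasurable ℓ μ) (hℓ_pos : ∀ᵐ x ∂μ, 0 < ℓ x) (hℓ_int : Integrable ℓ μ)
    (hZ : 0 < ∫ x, ℓ x ∂μ) (hg : AEMeasurable g μ) (hgL : ∀ᵐ x ∂μ, g x = exp (L x))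
    (hZg : 0 < ∫ x, g x ∂μ)
    (hlogℓ : Integrable (fun x => log (ℓ x))
      (μ.withDensity fun x => ENNReal.ofReal (ℓ x / ∫ x, ℓ x ∂μ)))
    (hL : Integrable L (μ.withDensity fun x => ENNReal.ofReal (ℓ x / ∫ x, ℓ x ∂μ))) :
    klDiv (μ.withDensity fun x => ENNReal.ofReal (ℓ x / ∫ x, ℓ x ∂μ))
        (μ.withDensity fun x => ENNReal.ofReal (g x / ∫ x, g x ∂μ)) =
      (∫ x, log (ℓ x) ∂(μ.withDensity fun x => ENNReal.ofReal (ℓ x / ∫ x, ℓ x ∂μ))) -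
        ((∫ x, L x ∂(μ.withDensity fun x => ENNReal.ofReal (ℓ x / ∫ x, ℓ x ∂μ))) -
          log (∫ x, exp (L x - log (ℓ x))
            ∂(μ.withDensity fun x => ENNReal.ofReal (ℓ x / ∫ x, ℓ x ∂μ)))) := by
  have := isProbabilityMeasure_withDensity_ofReal_div_integral
    (hℓ_pos.mono fun _ hx => hx.le) hℓ_int hZ
  rw [klDiv_withDensity_ofReal hℓ hℓ_pos hg hgL hZ hZg hlogℓ hL,
    integral_exp_sub_log_withDensity_ofReal hℓ hℓ_pos hgL hZ, log_div hZg.ne' hZ.ne']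
  ring

end NormalizedDensities

lemma Real.prod_rpow_eq_exp_sum_mul_log {ι : Type*} (s : Finset ι) {S v : ι → ℝ}
    (hS : ∀ k ∈ s, 0 < S k) : ∏ k ∈ s, S k ^ v k = exp (∑ k ∈ s, v k * log (S k)) := by
  rw [exp_sum]
  exact Finset.prod_congr rfl fun k hk => by rw [rpow_def_of_pos (hS k hk), mul_comm]

lemma isMinOn_iff_isMaxOn_of_eq_sub {α : Type*} {F G : α → ℝ} {s : Set α} {c : ℝ}
    (h : ∀ x ∈ s, F x = c - G x) {a : α} (ha : a ∈ s) : IsMinOn F s a ↔ IsMaxOn G s a := by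
  simp only [isMinOn_iff, isMaxOn_iff]
  exact forall₂_congr fun x hx => by rw [h a ha, h x hx, sub_le_sub_iff_left]

theorem multi_level_objective_general
    {X : Type*} [MeasurableSpace X] (μ : Measure X) [SigmaFinite μ]
    (ℓ : X → ℝ) (hℓ_meas : Measurable ℓ) (hℓ_pos : ∀ᵐ x ∂μ, 0 < ℓ x)
    (hℓ_int : Integrable ℓ μ) (hZ_pos : 0 < ∫ x, ℓ x ∂μ)
    (p : Measure X)
    (hp : p = μ.withDensity (fun x => ENNReal.ofReal (ℓ x / ∫ x, ℓ x ∂μ)))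
    (Khat Mhat : ℕ) (f : Fin Khat → Fin Mhat → X → ℝ)
    (hf_meas : ∀ k i, Measurable (f k i))
    (gvw : ((Fin Khat → ℝ) × (Fin Khat → Fin Mhat → ℝ)) → X → ℝ)
    (hgvw : ∀ v w x, gvw (v, w) x =
      ∏ k : Fin Khat, (∑ i : Fin Mhat, w k i * f k i x) ^ v k)
    (W : Set ((Fin Khat → ℝ) × (Fin Khat → Fin Mhat → ℝ)))
    (hW_pos_ae : ∀ vw ∈ W, ∀ k, ∀ᵐ x ∂μ, 0 < ∑ i : Fin Mhat, vw.2 k i * f k i x)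
    (hW_pos : ∀ vw ∈ W, 0 < ∫ x, gvw vw x ∂μ)
    (hlogℓ_int : Integrable (fun x => Real.log (ℓ x)) p)
    (hW_log_int : ∀ vw ∈ W, Integrable (fun x =>
      ∑ k : Fin Khat, vw.1 k *
        Real.log (∑ i : Fin Mhat, vw.2 k i * f k i x)) p)
    (q : ((Fin Khat → ℝ) × (Fin Khat → Fin Mhat → ℝ)) → Measure X)
    (hq : ∀ vw, q vw =
      μ.withDensity (fun x => ENNReal.ofReal (gvw vw x / ∫ x, gvw vw x ∂μ)))
    (J : ((Fin Khat → ℝ) × (Fin Khat → Fin Mhat → ℝ)) → ℝ)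
    (hJ : ∀ vw, J vw =
      (∫ x, ∑ k : Fin Khat, vw.1 k *
          Real.log (∑ i : Fin Mhat, vw.2 k i * f k i x) ∂p) -
        Real.log (∫ x, Real.exp ((∑ k : Fin Khat, vw.1 k *
          Real.log (∑ i : Fin Mhat, vw.2 k i * f k i x)) -
            Real.log (ℓ x)) ∂p)) :
    (∀ vw ∈ W, klDiv p (q vw) = (∫ x, Real.log (ℓ x) ∂p) - J vw) ∧
      (∀ vwstar ∈ W,
        IsMinOn (fun vw => klDiv p (q vw)) W vwstar ↔ IsMaxOn J W vwstar) := by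
  have hkl : ∀ vw ∈ W, klDiv p (q vw) = (∫ x, Real.log (ℓ x) ∂p) - J vw := by
    rintro ⟨v, w⟩ hvw
    have hg_meas : Measurable (gvw (v, w)) := by
      simp only [funext (hgvw v w)]
      fun_prop
    have hg_exp : ∀ᵐ x ∂μ, gvw (v, w) x =
        exp (∑ k, v k * log (∑ i, w k i * f k i x)) := by
      filter_upwards [ae_all_iff.2 (hW_pos_ae _ hvw)] with x hx
      rw [hgvw, prod_rpow_eq_exp_sum_mul_log _ fun k _ => hx k]
    subst hp
    rw [hq, hJ]
    exact klDiv_normalized_withDensity_eq hℓ_meas.aemeasurable hℓ_pos hℓ_int hZ_pos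
      hg_meas.aemeasurable hg_exp (hW_pos _ hvw) hlogℓ_int (hW_log_int _ hvw)
  exact ⟨hkl, fun _ h => isMinOn_iff_isMaxOn_of_eq_sub hkl h⟩

/-- multi-level objective. With posterior `p` of density
`ℓ/Z` w.r.t. `μ`, group-parameter likelihoods `f k i ≥ 0`, weighted likelihood
`gvw (v, w) x = ∏ k, (∑ i, w k i * f k i x) ^ v k` and reconstructed posterior
`q (v, w)`, for every admissible tuple `(v, w) ∈ W` we have
`KL(p ‖ q (v, w)) = ∫ log ℓ dp − J (v, w)`, where
`J (v, w) = ∫ ∑ k, v k * log (∑ i, w k i * f k i) dp −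
  log ∫ exp (∑ k, v k * log (∑ i, w k i * f k i) − log ℓ) dp`;
hence a tuple in `W` minimizes the KL divergence over `W` iff it maximizes `J`
over `W`. -/
theorem multi_level_objective
    {X : Type*} [MeasurableSpace X] (μ : Measure X) [SigmaFinite μ]
    (ℓ : X → ℝ) (hℓ_meas : Measurable ℓ) (hℓ_pos : ∀ᵐ x ∂μ, 0 < ℓ x)
    (hℓ_int : Integrable ℓ μ) (hZ_pos : 0 < ∫ x, ℓ x ∂μ)
    (p : Measure X)
    (hp : p = μ.withDensity (fun x => ENNReal.ofReal (ℓ x / ∫ x, ℓ x ∂μ)))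
    (Khat Mhat : ℕ) (f : Fin Khat → Fin Mhat → X → ℝ)
    (hf_meas : ∀ k i, Measurable (f k i)) (hf_nonneg : ∀ k i x, 0 ≤ f k i x)
    (gvw : ((Fin Khat → ℝ) × (Fin Khat → Fin Mhat → ℝ)) → X → ℝ)
    (hgvw : ∀ v w x, gvw (v, w) x =
      ∏ k : Fin Khat, (∑ i : Fin Mhat, w k i * f k i x) ^ v k)
    (W : Set ((Fin Khat → ℝ) × (Fin Khat → Fin Mhat → ℝ)))
    (hW_nonneg : ∀ vw ∈ W, ∀ k i, 0 ≤ vw.2 k i)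
    (hW_pos_ae : ∀ vw ∈ W, ∀ k, ∀ᵐ x ∂μ, 0 < ∑ i : Fin Mhat, vw.2 k i * f k i x)
    (hW_int : ∀ vw ∈ W, Integrable (gvw vw) μ)
    (hW_pos : ∀ vw ∈ W, 0 < ∫ x, gvw vw x ∂μ)
    (hlogℓ_int : Integrable (fun x => Real.log (ℓ x)) p)
    (hW_log_int : ∀ vw ∈ W, Integrable (fun x =>
      ∑ k : Fin Khat, vw.1 k *
        Real.log (∑ i : Fin Mhat, vw.2 k i * f k i x)) p)
    (q : ((Fin Khat → ℝ) × (Fin Khat → Fin Mhat → ℝ)) → Measure X)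
    (hq : ∀ vw, q vw =
      μ.withDensity (fun x => ENNReal.ofReal (gvw vw x / ∫ x, gvw vw x ∂μ)))
    (J : ((Fin Khat → ℝ) × (Fin Khat → Fin Mhat → ℝ)) → ℝ)
    (hJ : ∀ vw, J vw =
      (∫ x, ∑ k : Fin Khat, vw.1 k *
          Real.log (∑ i : Fin Mhat, vw.2 k i * f k i x) ∂p) -
        Real.log (∫ x, Real.exp ((∑ k : Fin Khat, vw.1 k *
          Real.log (∑ i : Fin Mhat, vw.2 k i * f k i x)) -
            Real.log (ℓ x)) ∂p)) :
    (∀ vw ∈ W, klDiv p (q vw) = (∫ x, Real.log (ℓ x) ∂p) - J vw) ∧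
      (∀ vwstar ∈ W,
        IsMinOn (fun vw => klDiv p (q vw)) W vwstar ↔ IsMaxOn J W vwstar) :=
  multi_level_objective_general μ ℓ hℓ_meas hℓ_pos hℓ_int hZ_pos p hp Khat Mhat f hf_meas gvw hgvw W
    hW_pos_ae hW_pos hlogℓ_int hW_log_int q hq J hJ
end
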